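/- arXiv:1011.4050 — 6 statements merged into one kernel-verified Lean document; each statement's English description precedes it below -/
import Mathlib

section
/- Let n ≥ 0 and let a_1 ≤ a_2 ≤ … ≤ a_n be integers with 0 ≤ a_i < i for each i. Then the number of permutations σ of {1,…,n} such that σ(i) − 1 ≠ σ(j) for all i ∈ {1,…,n} and all j with 1 ≤ j ≤ a_i equals ∏_{i=1}^n (i − a_i). -/
/-!
A permutation `σ` of `Fin n` is encoded by its word `σ⁻¹ 0, σ⁻¹ 1, …`; the condition on `σ`
says exactly that every letter `y` directly following a letter `x` has `a y ≤ x`. Deleting the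
largest letter `n` from an admissible word of `0, …, n` leaves an admissible word, since
`a` is monotone. Conversely `n` can be inserted into an admissible word of `0, …, n - 1` at
the front or right after any letter `x ≥ a n`, and nowhere else: `n + 1 - a n` slots.
-/

open Finset

namespace List

theorem card_filter_range_getElem? {α : Type*} (p : α → Prop) [DecidablePred p] (l : List α) :
    #{k ∈ Finset.range l.length | ∀ x ∈ l[k]?, p x} = l.countP p := by
  induction l with
  | nil => simp
  | cons a l ih =>
    rw [card_filter, length_cons, Finset.sum_range_succ', countP_cons, ← ih, card_filter]
    simp

variable {α : Type*} [DecidableEq α] {a : α} {l : List α} {k : ℕ}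

theorem idxOf_take_append_cons_drop (ha : a ∉ l) (hk : k ≤ l.length) :
    (l.take k ++ a :: l.drop k).idxOf a = k := by
  rw [idxOf_append_of_notMem (fun h => ha (mem_of_mem_take h)), idxOf_cons_self, length_take]
  omega

theorem erase_take_append_cons_drop (ha : a ∉ l) :
    (l.take k ++ a :: l.drop k).erase a = l := by
  rw [erase_append_right _ (fun h => ha (mem_of_mem_take h)), erase_cons_head, take_append_drop]

theorem exists_eq_take_append_cons_drop_erase (ha : a ∈ l) :
    ∃ k ≤ (l.erase a).length, l = (l.erase a).take k ++ a :: (l.erase a).drop k := by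
  obtain ⟨l₁, l₂, -, rfl, h⟩ := exists_erase_eq ha
  refine ⟨l₁.length, by simp [h], ?_⟩
  rw [h, take_left', drop_left'] <;> rfl

theorem range_succ_perm_cons (n : ℕ) : range (n + 1) ~ n :: range n := by
  rw [range_succ]
  exact perm_append_singleton n _

end List

section AdmissibleWords

variable {A : ℕ → ℕ} {n : ℕ} {m l : List ℕ}

def admissibleWords (A : ℕ → ℕ) (n : ℕ) : Finset (List ℕ) :=
  {l ∈ (List.range n).permutations.toFinset | l.IsChain fun x y => A y ≤ x}

theorem mem_admissibleWords :
    l ∈ admissibleWords A n ↔ l.Perm (List.range n) ∧ l.IsChain fun x y => A y ≤ x := by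
  simp [admissibleWords, List.mem_permutations]

theorem isChain_take_append_cons_drop_iff (hA : Monotone A) (hAn : A n ≤ n)
    (hm : ∀ y ∈ m, y ≤ n) (k : ℕ) :
    (m.take k ++ n :: m.drop k).IsChain (fun x y => A y ≤ x) ↔
      m.IsChain (fun x y => A y ≤ x) ∧ ∀ x ∈ (m.take k).getLast?, A n ≤ x := by
  have hle : ∀ y ∈ (m.drop k).head?, A y ≤ A n :=
    fun y hy => hA (hm y (List.mem_of_mem_drop (List.mem_of_mem_head? hy)))
  have hsplit := List.isChain_append (R := fun x y => A y ≤ x) (l₁ := m.take k) (l₂ := m.drop k)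
  rw [List.take_append_drop] at hsplit
  simp only [hsplit, List.isChain_append, List.isChain_cons, List.head?_cons,
    Option.mem_some_iff, forall_eq']
  constructor
  · rintro ⟨htake, ⟨-, hdrop⟩, hjoin⟩
    exact ⟨⟨htake, hdrop, fun x hx y hy => (hle y hy).trans (hjoin x hx)⟩, hjoin⟩
  · rintro ⟨⟨htake, hdrop, -⟩, hjoin⟩
    exact ⟨htake, ⟨fun y hy => (hle y hy).trans hAn, hdrop⟩, hjoin⟩

theorem card_insertion_slots (hm : m.Perm (List.range n)) (hAn : A n ≤ n) :
    #{k ∈ Finset.range (n + 1) | ∀ x ∈ (m.take k).getLast?, A n ≤ x} = n + 1 - A n := by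
  have hlen : m.length = n := by simpa using hm.length_eq
  have hlast : ∀ k < n, (m.take (k + 1)).getLast? = m[k]? := fun k hk => by
    simp [List.getLast?_take, List.getElem?_eq_getElem (hlen ▸ hk : k < m.length)]
  have hcount : m.countP (fun x => A n ≤ x) = n - A n := by
    rw [hm.countP_eq, ← List.nodup_range.card_eq_countP, List.toFinset_range, ← Nat.card_Ico]
    congr 1
    ext x
    simp [and_comm]
  have hslots : #{k ∈ Finset.range n | ∀ x ∈ m[k]?, A n ≤ x} = n - A n := by
    rw [← hcount, ← List.card_filter_range_getElem?, hlen]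
  rw [card_filter, Finset.sum_range_succ', Finset.sum_congr rfl fun k hk => by
    rw [hlast k (Finset.mem_range.1 hk)], ← card_filter, hslots]
  rw [if_pos (by simp)]
  omega

theorem erase_mem_admissibleWords (hA : Monotone A) (hAn : A n ≤ n)
    (hl : l ∈ admissibleWords A (n + 1)) : l.erase n ∈ admissibleWords A n := by
  rw [mem_admissibleWords] at hl ⊢
  have hperm : (l.erase n).Perm (List.range n) := by
    simpa using (hl.1.trans (List.range_succ_perm_cons n)).erase n
  obtain ⟨k, -, hk⟩ :=
    List.exists_eq_take_append_cons_drop_erase (hl.1.mem_iff.2 List.self_mem_range_succ)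
  have hchain := hl.2
  rw [hk, isChain_take_append_cons_drop_iff hA hAn
    (fun y hy => (List.mem_range.1 (hperm.mem_iff.1 hy)).le)] at hchain
  exact ⟨hperm, hchain.1⟩

theorem card_filter_erase_eq (hA : Monotone A) (hAn : A n ≤ n) (hm : m ∈ admissibleWords A n) :
    #{l ∈ admissibleWords A (n + 1) | l.erase n = m} = n + 1 - A n := by
  rw [mem_admissibleWords] at hm
  have hlen : m.length = n := by simpa using hm.1.length_eq
  have hmn : ∀ y ∈ m, y < n := fun y hy => List.mem_range.1 (hm.1.mem_iff.1 hy)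
  have hnm : n ∉ m := fun h => (hmn n h).false
  have hchain_iff := isChain_take_append_cons_drop_iff hA hAn fun y hy => (hmn y hy).le
  rw [← card_insertion_slots hm.1 hAn, eq_comm]
  refine card_bij (fun k _ => m.take k ++ n :: m.drop k) ?_ ?_ ?_
  · intro k hk
    simp only [Finset.mem_filter, Finset.mem_range] at hk
    refine Finset.mem_filter.2 ⟨mem_admissibleWords.2 ⟨?_, (hchain_iff k).2 ⟨hm.2, hk.2⟩⟩,
      List.erase_take_append_cons_drop hnm⟩
    refine List.perm_middle.trans ?_
    rw [List.take_append_drop]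
    exact (hm.1.cons n).trans (List.range_succ_perm_cons n).symm
  · intro k hk k' hk' h
    simp only [Finset.mem_filter, Finset.mem_range] at hk hk'
    rw [← List.idxOf_take_append_cons_drop hnm (k := k) (by omega), h,
      List.idxOf_take_append_cons_drop hnm (by omega)]
  · intro l hfiber
    obtain ⟨hl, rfl⟩ := Finset.mem_filter.1 hfiber
    obtain ⟨k, hk, hlk⟩ := List.exists_eq_take_append_cons_drop_erase
      ((mem_admissibleWords.1 hl).1.mem_iff.2 List.self_mem_range_succ)
    have hchain := (mem_admissibleWords.1 hl).2
    rw [hlk, hchain_iff] at hchain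
    exact ⟨k, Finset.mem_filter.2 ⟨Finset.mem_range.2 (by omega), hchain.2⟩, hlk.symm⟩

theorem card_admissibleWords (hA : Monotone A) (hA_le : ∀ x, A x ≤ x) (n : ℕ) :
    #(admissibleWords A n) = ∏ i ∈ Finset.range n, (i + 1 - A i) := by
  induction n with
  | zero => simp [admissibleWords, Finset.filter_singleton]
  | succ n ih =>
    rw [card_eq_sum_card_fiberwise fun l => erase_mem_admissibleWords hA (hA_le n),
      sum_congr rfl fun m => card_filter_erase_eq hA (hA_le n), sum_const, smul_eq_mul, ih,
      prod_range_succ]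

theorem isChain_ofFn_symm_iff (σ : Equiv.Perm (Fin n)) :
    (List.ofFn fun p => (σ.symm p : ℕ)).IsChain (fun x y => A y ≤ x) ↔
      ∀ i j : Fin n, (j : ℕ) < A i → (σ i : ℕ) ≠ (σ j : ℕ) + 1 := by
  rw [List.isChain_ofFn]
  constructor
  · intro h i j hji hij
    have hsucc : (⟨σ j + 1, hij ▸ (σ i).isLt⟩ : Fin n) = σ i := Fin.ext hij.symm
    have := h (σ j) (hij ▸ (σ i).isLt)
    simp only [Fin.eta, hsucc, Equiv.symm_apply_apply] at this
    omega
  · intro h p hp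
    by_contra! hlt
    exact h _ _ hlt (by simp)

theorem exists_perm_ofFn_symm_eq {l : List ℕ} (hl : l.Perm (List.range n)) :
    ∃ σ : Equiv.Perm (Fin n), (List.ofFn fun p => (σ.symm p : ℕ)) = l := by
  have hlen : l.length = n := by simpa using hl.length_eq
  have hlt : ∀ p : Fin n, l[(p : ℕ)] < n := fun p =>
    List.mem_range.1 (hl.mem_iff.1 (List.getElem_mem _))
  let f : Fin n → Fin n := fun p => ⟨l[(p : ℕ)], hlt p⟩
  have hf : Function.Injective f := fun p q hpq =>
    Fin.ext ((hl.nodup_iff.2 List.nodup_range).getElem_inj_iff.1 (Fin.val_eq_of_eq hpq))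
  refine ⟨(Equiv.ofBijective f (Finite.injective_iff_bijective.1 hf)).symm, ?_⟩
  refine List.ext_getElem (by simp [hlen]) fun p _ _ => ?_
  simp [f]

theorem card_perms_eq_card_admissibleWords :
    #{σ : Equiv.Perm (Fin n) | ∀ i j : Fin n, (j : ℕ) < A i → (σ i : ℕ) ≠ (σ j : ℕ) + 1} =
      #(admissibleWords A n) := by
  refine card_bij (fun σ _ => List.ofFn fun p => (σ.symm p : ℕ)) ?_ ?_ ?_
  · intro σ hσ
    refine mem_admissibleWords.2 ⟨?_, (isChain_ofFn_symm_iff σ).2 (Finset.mem_filter.1 hσ).2⟩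
    have := Equiv.Perm.ofFn_comp_perm σ.symm Fin.val
    rwa [List.ofFn_eq_map (f := Fin.val), List.map_coe_finRange_eq_range] at this
  · intro σ _ τ _ h
    exact Equiv.symm_bijective.injective
      (Equiv.ext fun p => Fin.ext (congrFun (List.ofFn_injective h) p))
  · intro l hl
    obtain ⟨hperm, hchain⟩ := mem_admissibleWords.1 hl
    obtain ⟨σ, rfl⟩ := exists_perm_ofFn_symm_eq hperm
    exact ⟨σ, Finset.mem_filter.2 ⟨mem_univ σ, (isChain_ofFn_symm_iff σ).1 hchain⟩, rfl⟩

end AdmissibleWords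

theorem Fin.exists_monotone_extend_le_id {n : ℕ} {a : Fin n → ℕ} (ha : Monotone a)
    (ha' : ∀ i : Fin n, a i ≤ i) :
    ∃ A : ℕ → ℕ, Monotone A ∧ (∀ x, A x ≤ x) ∧ ∀ i : Fin n, A i = a i := by
  set A : ℕ → ℕ := fun x => if h : x < n then a ⟨x, h⟩ else x
  have hA_le : ∀ x, A x ≤ x := fun x => by
    by_cases h : x < n
    · simpa [A, h] using ha' ⟨x, h⟩
    · simp [A, h]
  refine ⟨A, fun x y hxy => ?_, hA_le, fun i => dif_pos i.isLt⟩
  by_cases hy : y < n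
  · have hx : x < n := by omega
    simpa [A, hx, hy] using ha (show (⟨x, hx⟩ : Fin n) ≤ ⟨y, hy⟩ from hxy)
  · exact (hA_le x).trans (by simp [A, hy, hxy])

/-- Here everything is 0-indexed: `i : Fin n` stands for `i + 1 ∈ {1, …, n}`, so `1 ≤ j ≤ a_i`
becomes `(j : ℕ) < a i` and `σ(i) - 1 ≠ σ(j)` becomes `(σ i : ℕ) ≠ (σ j : ℕ) + 1`. -/
theorem count_admissible_perms (n : ℕ) (a : Fin n → ℕ) (ha : Monotone a)
    (ha' : ∀ i : Fin n, a i ≤ (i : ℕ)) :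
    (Finset.univ.filter (fun σ : Equiv.Perm (Fin n) =>
      ∀ i j : Fin n, (j : ℕ) < a i → (σ i : ℕ) ≠ (σ j : ℕ) + 1)).card =
    ∏ i : Fin n, ((i : ℕ) + 1 - a i) := by
  obtain ⟨A, hA, hA_le, hA_fin⟩ := Fin.exists_monotone_extend_le_id ha ha'
  simp_rw [← hA_fin]
  rw [card_perms_eq_card_admissibleWords, card_admissibleWords hA hA_le,
    Fin.prod_univ_eq_prod_range (fun i => i + 1 - A i)]
end

section
/- Let r ≥ 1 and let n_1,…,n_r be nonnegative integers. Let P be a polynomial with rational coefficients in the variables x_{δ,j}, for 1 ≤ δ ≤ r and 1 ≤ j ≤ n_δ. If the total degree of P is strictly less than Σ_{δ=1}^r n_δ(n_δ−1)/2, then Σ over all tuples (σ_1,…,σ_r), where each σ_δ is a permutation of {1,…,n_δ}, of (∏_{δ=1}^r sgn(σ_δ)) times the value of P at the point x_{δ,j} = σ_δ(j), equals 0. -/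
open MvPolynomial

lemma inj_sum_ge (n : ℕ) (d : Fin n → ℕ) (hd : Function.Injective d) :
    n * (n - 1) / 2 ≤ ∑ j, d j := by
  classical
  set s : Finset ℕ := Finset.image d Finset.univ with hs
  have hcard : s.card = n := by
    rw [hs, Finset.card_image_of_injective _ hd, Finset.card_univ, Fintype.card_fin]
  have hsum : ∑ x ∈ s, x = ∑ j, d j := Finset.sum_image (fun a _ b _ h => hd h)
  set f : Fin n → ℕ := fun i => s.orderEmbOfFin hcard i with hf
  have hmono : StrictMono f := (s.orderEmbOfFin hcard).strictMono
  have hle : ∀ k (hk : k < n), k ≤ f ⟨k, hk⟩ := by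
    intro k
    induction k with
    | zero => intro hk; exact Nat.zero_le _
    | succ k ih =>
      intro hk
      have h1 := ih (by omega)
      have h2 := hmono (show (⟨k, by omega⟩ : Fin n) < ⟨k+1, hk⟩ by simp [Fin.lt_def])
      omega
  have himg : Finset.image f Finset.univ = s := by
    apply Finset.coe_injective
    rw [Finset.coe_image, Finset.coe_univ, Set.image_univ]
    exact Finset.range_orderEmbOfFin s hcard
  have h2 : ∑ x ∈ s, x = ∑ i : Fin n, f i := by
    rw [← himg]
    exact Finset.sum_image (fun a _ b _ h => (s.orderEmbOfFin hcard).injective h)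
  have h3 : n * (n - 1) / 2 ≤ ∑ i : Fin n, f i := by
    calc n * (n - 1) / 2 = ∑ i ∈ Finset.range n, i := (Finset.sum_range_id n).symm
    _ = ∑ i : Fin n, (i : ℕ) := (Fin.sum_univ_eq_sum_range _ _).symm
    _ ≤ ∑ i : Fin n, f i := Finset.sum_le_sum (fun i _ => hle i i.isLt)
  omega

lemma key (n : ℕ) (d : Fin n → ℕ) (hd : ∑ j, d j < n * (n - 1) / 2) :
    ∑ σ : Equiv.Perm (Fin n), ((Equiv.Perm.sign σ : ℤ) : ℚ) *
      ∏ j, (((σ j : ℕ) : ℚ) + 1) ^ (d j) = 0 := by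
  classical
  set M : Matrix (Fin n) (Fin n) ℚ := fun i j => (((i : ℕ) : ℚ) + 1) ^ (d j) with hM
  have hdet : ∑ σ : Equiv.Perm (Fin n), ((Equiv.Perm.sign σ : ℤ) : ℚ) *
      ∏ j, (((σ j : ℕ) : ℚ) + 1) ^ (d j) = M.det := by
    rw [Matrix.det_apply']
  rw [hdet]
  have hninj : ¬ Function.Injective d := fun h => absurd (inj_sum_ge n d h) (by omega)
  rw [Function.not_injective_iff] at hninj
  obtain ⟨a, b, hab, hne⟩ := hninj
  rw [← Matrix.det_transpose]
  exact Matrix.det_zero_of_row_eq hne (by funext i; simp [Matrix.transpose, hM, hab])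

/-- An alternating sum over tuples of permutations of a polynomial of low total degree
vanishes: if `deg P < Σ_δ n_δ(n_δ-1)/2`, then
`Σ_{(σ_1,…,σ_r)} (∏_δ sgn σ_δ) · P(σ_δ(j)) = 0`. -/
theorem alternating_sum_vanishes (r : ℕ) (hr : 1 ≤ r) (n : Fin r → ℕ)
    (P : MvPolynomial ((δ : Fin r) × Fin (n δ)) ℚ)
    (hP : P.totalDegree < ∑ δ : Fin r, n δ * (n δ - 1) / 2) :
    ∑ σ : ((δ : Fin r) → Equiv.Perm (Fin (n δ))),
      (∏ δ : Fin r, ((Equiv.Perm.sign (σ δ) : ℤ) : ℚ)) *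
        eval (fun p : (δ : Fin r) × Fin (n δ) => ((σ p.1 p.2 : ℕ) : ℚ) + 1) P = 0 := by
  classical
  simp_rw [eval_eq', Finset.mul_sum]
  rw [Finset.sum_comm]
  apply Finset.sum_eq_zero
  intro d hd
  -- pull coeff out
  have step1 : ∀ σ : ((δ : Fin r) → Equiv.Perm (Fin (n δ))),
      (∏ δ : Fin r, ((Equiv.Perm.sign (σ δ) : ℤ) : ℚ)) *
        (P.coeff d * ∏ p : (δ : Fin r) × Fin (n δ), (((σ p.1 p.2 : ℕ) : ℚ) + 1) ^ d p)
      = P.coeff d * ∏ δ : Fin r, (((Equiv.Perm.sign (σ δ) : ℤ) : ℚ) *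
          ∏ j : Fin (n δ), (((σ δ j : ℕ) : ℚ) + 1) ^ d ⟨δ, j⟩) := by
    intro σ
    rw [Finset.prod_mul_distrib]
    have : ∏ p : (δ : Fin r) × Fin (n δ), (((σ p.1 p.2 : ℕ) : ℚ) + 1) ^ d p
        = ∏ δ : Fin r, ∏ j : Fin (n δ), (((σ δ j : ℕ) : ℚ) + 1) ^ d ⟨δ, j⟩ := by
      rw [← Finset.univ_sigma_univ, Finset.prod_sigma]
    rw [this]; ring
  simp_rw [step1]
  rw [← Finset.mul_sum]
  -- factor the sum over the pi type
  have step2 : ∑ σ : ((δ : Fin r) → Equiv.Perm (Fin (n δ))),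
      ∏ δ : Fin r, (((Equiv.Perm.sign (σ δ) : ℤ) : ℚ) *
          ∏ j : Fin (n δ), (((σ δ j : ℕ) : ℚ) + 1) ^ d ⟨δ, j⟩)
      = ∏ δ : Fin r, ∑ τ : Equiv.Perm (Fin (n δ)), (((Equiv.Perm.sign τ : ℤ) : ℚ) *
          ∏ j : Fin (n δ), (((τ j : ℕ) : ℚ) + 1) ^ d ⟨δ, j⟩) := by
    rw [Finset.prod_univ_sum]
    rw [Fintype.piFinset_univ]
  rw [step2]
  -- find a block where the degree is small
  have hdeg : ∑ δ : Fin r, ∑ j : Fin (n δ), d ⟨δ, j⟩ ≤ P.totalDegree := by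
    have h1 := MvPolynomial.le_totalDegree hd
    have h2 : (d.sum fun _ e => e) = ∑ p : (δ : Fin r) × Fin (n δ), d p :=
      Finsupp.sum_fintype _ _ (fun _ => rfl)
    rw [h2] at h1
    rw [← Finset.univ_sigma_univ, Finset.sum_sigma] at h1
    exact h1
  have hex : ∃ δ : Fin r, ∑ j : Fin (n δ), d ⟨δ, j⟩ < n δ * (n δ - 1) / 2 := by
    by_contra h
    push_neg at h
    have := Finset.sum_le_sum (fun δ (_ : δ ∈ Finset.univ) => h δ)
    omega
  obtain ⟨δ0, hδ0⟩ := hex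
  rw [Finset.prod_eq_zero (Finset.mem_univ δ0) (key (n δ0) (fun j => d ⟨δ0, j⟩) hδ0)]
  ring
end

section
/- Let n ≥ 0, let R = ℚ[x_1,…,x_n], let e_1,…,e_n ∈ R be the elementary symmetric polynomials, and let c_k = e_k(1,2,…,n). Then the ideal I = (e_1−c_1,…,e_n−c_n) ⊂ R equals the ideal of all polynomials f ∈ R such that f(σ(1),…,σ(n)) = 0 for every permutation σ of {1,…,n}. -/
/-!
Every generator `e_k - c_k` vanishes at the permutations of `(1, …, n)`. Conversely, by Vieta's
formulas `∏ⱼ (T - j) ≡ ∏ᵢ (T - xᵢ)` modulo `I`, and substituting `T = xᵢ` shows that `I` contains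
`∏ⱼ (xᵢ - j)` for every `i`. By Alon's Combinatorial Nullstellensatz `I` therefore contains every
polynomial vanishing on the grid `{1, …, n}ⁿ`. A grid point at which `I` vanishes has the same
elementary symmetric functions as `(1, …, n)`, hence is a permutation of it, and an ideal containing
the grid ideal is determined by the grid points of its zero locus.
-/

open MvPolynomial

/-- `c k` is the value of the `k`-th elementary symmetric polynomial at `(1,2,…,n)`. -/
noncomputable def cval (n k : ℕ) : ℚ :=
  eval (fun i : Fin n => ((i : ℕ) : ℚ) + 1) (esymm (Fin n) ℚ k)

namespace Multiset

variable {R : Type*} [CommRing R]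

theorem prod_X_sub_C_eq_of_esymm_eq {s t : Multiset R} (hcard : card s = card t)
    (h : ∀ k, s.esymm k = t.esymm k) :
    (s.map fun a => Polynomial.X - Polynomial.C a).prod =
      (t.map fun a => Polynomial.X - Polynomial.C a).prod := by
  simp only [prod_X_sub_X_eq_sum_esymm, hcard, h]

theorem prod_map_sub_eq_zero_of_esymm_eq {s t : Multiset R} (hcard : card s = card t)
    (h : ∀ k, s.esymm k = t.esymm k) {a : R} (ha : a ∈ s) :
    (t.map fun b => a - b).prod = 0 := by
  have := congrArg (Polynomial.eval a) (prod_X_sub_C_eq_of_esymm_eq hcard h)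
  simp only [Polynomial.eval_multiset_prod, map_map, Function.comp_def, Polynomial.eval_sub,
    Polynomial.eval_X, Polynomial.eval_C] at this
  rw [← this]
  exact prod_eq_zero (mem_map.2 ⟨a, ha, sub_self a⟩)

theorem eq_of_esymm_eq [IsDomain R] {s t : Multiset R} (hcard : card s = card t)
    (h : ∀ k, s.esymm k = t.esymm k) : s = t := by
  simpa only [Polynomial.roots_multiset_prod_X_sub_C] using
    congrArg Polynomial.roots (prod_X_sub_C_eq_of_esymm_eq hcard h)

end Multiset

namespace MvPolynomial

theorem esymm_eq_zero_of_card_lt {σ R : Type*} [Fintype σ] [CommSemiring R] {k : ℕ}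
    (hk : Fintype.card σ < k) : esymm σ R k = 0 := by
  rw [esymm, Finset.powersetCard_eq_empty.2 (by simpa using hk), Finset.sum_empty]

variable {K σ : Type*} [Field K] [Fintype σ]

theorem mem_of_eval_eq_zero_on_grid {S : σ → Finset K} (hS : ∀ i, (S i).Nonempty)
    {J : Ideal (MvPolynomial σ K)} (hJ : ∀ i, ∏ s ∈ S i, (X i - C s) ∈ J)
    {f : MvPolynomial σ K} (hf : ∀ x, (∀ i, x i ∈ S i) → eval x f = 0) : f ∈ J := by
  obtain ⟨h, -, rfl⟩ := combinatorial_nullstellensatz_exists_linearCombination S hS f hf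
  rw [Finsupp.linearCombination_apply]
  exact Ideal.sum_mem _ fun i _ => J.mul_mem_left _ (hJ i)

/- For each grid point `x` off the zero locus of `J`, some `q x ≡ 1 (mod J)` vanishes at `x`;
then `f * ∏ q x` vanishes on the whole grid and `f ≡ f * ∏ q x (mod J)`. -/
theorem mem_of_eval_eq_zero_on_grid_zeroLocus {S : σ → Finset K} (hS : ∀ i, (S i).Nonempty)
    {J : Ideal (MvPolynomial σ K)} (hJ : ∀ i, ∏ s ∈ S i, (X i - C s) ∈ J)
    {f : MvPolynomial σ K}
    (hf : ∀ x, (∀ i, x i ∈ S i) → (∀ p ∈ J, eval x p = 0) → eval x f = 0) : f ∈ J := by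
  classical
  have hq : ∀ x : σ → K, ∃ q, 1 - q ∈ J ∧ ((∃ p ∈ J, eval x p ≠ 0) → eval x q = 0) := by
    intro x
    by_cases hx : ∃ p ∈ J, eval x p ≠ 0
    · obtain ⟨p, hpJ, hpx⟩ := hx
      refine ⟨1 - C (eval x p)⁻¹ * p, by simpa using J.mul_mem_left _ hpJ, fun _ => ?_⟩
      simp [hpx]
    · exact ⟨1, by simp, fun h => absurd h hx⟩
  choose q hqJ hqx using hq
  set u := ∏ x ∈ Fintype.piFinset S, q x
  have hu : 1 - u ∈ J := by
    rw [← Ideal.Quotient.eq, map_prod]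
    exact (Finset.prod_eq_one fun x _ => (Ideal.Quotient.eq.2 (hqJ x)).symm).symm
  have hfu : f * u ∈ J := mem_of_eval_eq_zero_on_grid hS hJ fun x hx => by
    rw [map_mul]
    by_cases h : ∃ p ∈ J, eval x p ≠ 0
    · rw [map_prod, Finset.prod_eq_zero (Fintype.mem_piFinset.2 hx) (hqx x h), mul_zero]
    · push Not at h
      rw [hf x hx h, zero_mul]
  have := J.add_mem (J.mul_mem_left f hu) hfu
  rwa [← mul_add, sub_add_cancel, mul_one] at this

end MvPolynomial

def standardPoint (n : ℕ) (i : Fin n) : ℚ := ((i : ℕ) : ℚ) + 1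

theorem standardPoint_injective (n : ℕ) : Function.Injective (standardPoint n) := by
  intro i j h
  exact Fin.ext (by simpa [standardPoint] using h)

noncomputable def permIdeal (n : ℕ) : Ideal (MvPolynomial (Fin n) ℚ) :=
  Ideal.span (Set.range fun k : Fin n =>
    esymm (Fin n) ℚ ((k : ℕ) + 1) - C (cval n ((k : ℕ) + 1)))

theorem esymm_sub_C_cval_mem_permIdeal (n k : ℕ) :
    esymm (Fin n) ℚ k - C (cval n k) ∈ permIdeal n := by
  rcases k with _ | k
  · simp [cval, esymm_zero]
  rcases lt_or_ge k n with hk | hk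
  · exact Ideal.subset_span ⟨⟨k, hk⟩, rfl⟩
  · have h0 : esymm (Fin n) ℚ (k + 1) = 0 :=
      esymm_eq_zero_of_card_lt (by rw [Fintype.card_fin]; omega)
    simp [cval, h0]

theorem permIdeal_le_ker_eval_comp_perm (n : ℕ) (σ : Equiv.Perm (Fin n)) :
    permIdeal n ≤ RingHom.ker (eval (standardPoint n ∘ σ)) := by
  rw [permIdeal, Ideal.span_le]
  rintro _ ⟨k, rfl⟩
  rw [SetLike.mem_coe, RingHom.mem_ker, map_sub, eval_C, ← eval_rename, rename_esymm]
  exact sub_self _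

theorem prod_X_sub_C_mem_permIdeal (n : ℕ) (i : Fin n) :
    ∏ s ∈ Finset.univ.image (standardPoint n), (X i - C s) ∈ permIdeal n := by
  let π := Ideal.Quotient.mkₐ ℚ (permIdeal n)
  have hesymm (k : ℕ) : (Finset.univ.val.map fun i => π (X i)).esymm k =
      (Finset.univ.val.map fun j => π (C (standardPoint n j))).esymm k := by
    rw [← aeval_esymm_eq_multiset_esymm (R := ℚ) (σ := Fin n),
      ← aeval_esymm_eq_multiset_esymm (R := ℚ) (σ := Fin n), ← comp_aeval_apply,
      ← comp_aeval_apply, aeval_X_left_apply,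
      show (fun j => C (standardPoint n j)) = C ∘ standardPoint n from rfl, aeval_C_comp_left]
    simp only [π, Ideal.Quotient.mkₐ_eq_mk]
    exact Ideal.Quotient.eq.2 (esymm_sub_C_cval_mem_permIdeal n k)
  have := Multiset.prod_map_sub_eq_zero_of_esymm_eq (by simp) hesymm
    (Multiset.mem_map_of_mem _ (Finset.mem_univ_val i))
  rw [Finset.prod_image fun a _ b _ h => standardPoint_injective n h,
    ← Ideal.Quotient.eq_zero_iff_mem]
  simpa only [map_multiset_prod, map_sub, Finset.prod_eq_multiset_prod, Multiset.map_map,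
    Function.comp_def, π, Ideal.Quotient.mkₐ_eq_mk] using this

theorem exists_perm_of_eval_eq_zero_on_permIdeal {n : ℕ} {x : Fin n → ℚ}
    (hx : ∀ i, x i ∈ Finset.univ.image (standardPoint n))
    (hxJ : ∀ p ∈ permIdeal n, eval x p = 0) :
    ∃ σ : Equiv.Perm (Fin n), x = standardPoint n ∘ σ := by
  choose w hw using fun i => Finset.mem_image.1 (hx i)
  obtain rfl : x = standardPoint n ∘ w := funext fun i => (hw i).2.symm
  have hmap : Finset.univ.val.map (standardPoint n ∘ w) =
      Finset.univ.val.map (standardPoint n) := by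
    refine Multiset.eq_of_esymm_eq (by simp) fun k => ?_
    have := hxJ _ (esymm_sub_C_cval_mem_permIdeal n k)
    rw [map_sub, eval_C, sub_eq_zero] at this
    rwa [← aeval_esymm_eq_multiset_esymm (R := ℚ) (σ := Fin n),
      ← aeval_esymm_eq_multiset_esymm (R := ℚ) (σ := Fin n)]
  rw [← Multiset.map_map] at hmap
  exact ⟨Equiv.ofBijective w ((Multiset.bijective_iff_map_univ_eq_univ w).2
    (Multiset.map_injective (standardPoint_injective n) hmap)), rfl⟩

/-- The ideal `I = (e_1 - c_1, …, e_n - c_n)` equals the ideal of all polynomials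
vanishing at every permutation of `(1,…,n)`. -/
theorem permIdeal_eq_vanishing_ideal (n : ℕ) (f : MvPolynomial (Fin n) ℚ) :
    f ∈ Ideal.span (Set.range (fun k : Fin n =>
      esymm (Fin n) ℚ ((k : ℕ) + 1) - C (cval n ((k : ℕ) + 1)))) ↔
    ∀ σ : Equiv.Perm (Fin n),
      eval (fun i : Fin n => ((σ i : ℕ) : ℚ) + 1) f = 0 := by
  change f ∈ permIdeal n ↔ ∀ σ : Equiv.Perm (Fin n), eval (standardPoint n ∘ σ) f = 0
  refine ⟨fun hf σ => permIdeal_le_ker_eval_comp_perm n σ hf, fun hf => ?_⟩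
  refine mem_of_eval_eq_zero_on_grid_zeroLocus
    (S := fun _ => Finset.univ.image (standardPoint n))
    (fun i => ⟨_, Finset.mem_image_of_mem _ (Finset.mem_univ i)⟩)
    (prod_X_sub_C_mem_permIdeal n) fun x hx hxJ => ?_
  obtain ⟨σ, rfl⟩ := exists_perm_of_eval_eq_zero_on_permIdeal hx hxJ
  exact hf σ
end

section
/- Let n ≥ 0 and let R = ℚ[x_1,…,x_n]. For 1 ≤ k ≤ n define f_k = Σ_{i=k}^n x_i · ∏_{j=1}^{k−1} (x_j − x_i) ∈ R. Then the ideal (f_1,…,f_n) ⊂ R equals the ideal (e_1,…,e_n) generated by the elementary symmetric polynomials. -/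
open MvPolynomial

/-- `f_k = Σ_{i=k}^n x_i ∏_{j=1}^{k-1} (x_j - x_i)`, written 0-indexed: `k : Fin n`
corresponds to `k+1 ∈ {1,…,n}`. -/
noncomputable def fPoly (n : ℕ) (k : Fin n) : MvPolynomial (Fin n) ℚ :=
  ∑ i ∈ Finset.univ.filter (fun i : Fin n => k ≤ i),
    X i * ∏ j ∈ Finset.univ.filter (fun j : Fin n => j < k), (X j - X i)

lemma head_card (n : ℕ) (k : Fin n) :
    (Finset.univ.filter (fun j : Fin n => j < k)).card = (k : ℕ) := by
  have : Finset.univ.filter (fun j : Fin n => j < k) = Finset.Iio k := by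
    ext j; simp
  rw [this, Fin.card_Iio]

lemma fPoly_eq_sum_univ (n : ℕ) (k : Fin n) :
    fPoly n k = ∑ i : Fin n,
      X i * ∏ j ∈ Finset.univ.filter (fun j : Fin n => j < k), (X j - X i) := by
  rw [fPoly]
  refine Finset.sum_subset (Finset.filter_subset _ _) fun i _ hi => ?_
  have hik : i < k := by simpa using hi
  have : ∏ j ∈ Finset.univ.filter (fun j : Fin n => j < k), (X j - X i)
      = (0 : MvPolynomial (Fin n) ℚ) := by
    refine Finset.prod_eq_zero (Finset.mem_filter.mpr ⟨Finset.mem_univ i, hik⟩) ?_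
    simp
  rw [this, mul_zero]

/-- Expansion of `f_k` as a combination of the power sums `p_1, …, p_{k+1}`. -/
lemma fPoly_eq (n : ℕ) (k : Fin n) :
    fPoly n k = ∑ t ∈ (Finset.univ.filter (fun j : Fin n => j < k)).powerset,
      ((-1) ^ ((k : ℕ) - t.card) * ∏ j ∈ t, X j) *
        psum (Fin n) ℚ ((k : ℕ) - t.card + 1) := by
  classical
  set s := Finset.univ.filter (fun j : Fin n => j < k) with hs
  have hcard : s.card = (k : ℕ) := head_card n k
  rw [fPoly_eq_sum_univ]
  have step1 : ∀ i : Fin n,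
      (X i : MvPolynomial (Fin n) ℚ) * ∏ j ∈ s, (X j - X i)
        = ∑ t ∈ s.powerset, ((-1) ^ ((k:ℕ) - t.card) * ∏ j ∈ t, X j) * X i ^ ((k:ℕ) - t.card + 1) := by
    intro i
    have : ∏ j ∈ s, (X j - X i) = ∑ t ∈ s.powerset,
        (∏ j ∈ t, X j) * ∏ j ∈ s \ t, (-X i : MvPolynomial (Fin n) ℚ) := by
      simpa [sub_eq_add_neg] using Finset.prod_add (fun j : Fin n => (X j : MvPolynomial (Fin n) ℚ)) (fun _ => -X i) s
    rw [this, Finset.mul_sum]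
    refine Finset.sum_congr rfl fun t ht => ?_
    have htc : (s \ t).card = (k:ℕ) - t.card := by
      rw [Finset.card_sdiff_of_subset (Finset.mem_powerset.mp ht), hcard]
    rw [Finset.prod_const, htc, neg_pow]
    ring
  calc (∑ i : Fin n, X i * ∏ j ∈ s, (X j - X i))
      = ∑ i : Fin n, ∑ t ∈ s.powerset,
          ((-1) ^ ((k:ℕ) - t.card) * ∏ j ∈ t, X j) * X i ^ ((k:ℕ) - t.card + 1) :=
        Finset.sum_congr rfl fun i _ => step1 i
    _ = ∑ t ∈ s.powerset, ∑ i : Fin n,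
          ((-1) ^ ((k:ℕ) - t.card) * ∏ j ∈ t, X j) * X i ^ ((k:ℕ) - t.card + 1) :=
        Finset.sum_comm
    _ = _ := by
        refine Finset.sum_congr rfl fun t _ => ?_
        rw [← Finset.mul_sum, psum]

/-- The power sums `p_1, …, p_n`, 0-indexed. -/
noncomputable def pVec (n : ℕ) (k : Fin n) : MvPolynomial (Fin n) ℚ :=
  psum (Fin n) ℚ ((k : ℕ) + 1)

lemma fPoly_mem_spanP (n : ℕ) (k : Fin n) :
    fPoly n k ∈ Ideal.span (Set.range (pVec n)) := by
  rw [fPoly_eq]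
  refine Ideal.sum_mem _ fun t ht => Ideal.mul_mem_left _ _ ?_
  have h1 : (k : ℕ) - t.card < n := lt_of_le_of_lt (Nat.sub_le _ _) k.isLt
  exact Ideal.subset_span ⟨⟨(k : ℕ) - t.card, h1⟩, rfl⟩

lemma psum_mem_spanF (n : ℕ) : ∀ m : ℕ, m < n →
    psum (Fin n) ℚ (m + 1) ∈ Ideal.span (Set.range (fPoly n)) := by
  intro m
  induction m using Nat.strong_induction_on with
  | _ m ih =>
    intro hm
    set k : Fin n := ⟨m, hm⟩ with hk
    set s := Finset.univ.filter (fun j : Fin n => j < k) with hs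
    have hcard : s.card = m := head_card n k
    have hmem : (∅ : Finset (Fin n)) ∈ s.powerset := Finset.empty_mem_powerset s
    have hins : s.powerset = insert ∅ (s.powerset.erase ∅) :=
      (Finset.insert_erase hmem).symm
    have hfe := fPoly_eq n k
    rw [hins, Finset.sum_insert (Finset.notMem_erase _ _)] at hfe
    simp only [Finset.card_empty, Nat.sub_zero, Finset.prod_empty, mul_one] at hfe
    have key : ((-1 : MvPolynomial (Fin n) ℚ))^(m : ℕ) * psum (Fin n) ℚ (m + 1)
        = fPoly n k - ∑ t ∈ s.powerset.erase ∅,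
          ((-1) ^ (m - t.card) * ∏ j ∈ t, X j) * psum (Fin n) ℚ (m - t.card + 1) := by
      rw [hfe]; ring
    have hmem2 : ((-1 : MvPolynomial (Fin n) ℚ))^(m : ℕ) * psum (Fin n) ℚ (m + 1)
        ∈ Ideal.span (Set.range (fPoly n)) := by
      rw [key]
      refine Ideal.sub_mem _ (Ideal.subset_span ⟨k, rfl⟩)
        (Ideal.sum_mem _ fun t ht => Ideal.mul_mem_left _ _ ?_)
      obtain ⟨htne, htp⟩ := Finset.mem_erase.mp ht
      have htc : 1 ≤ t.card := Finset.card_pos.mpr (Finset.nonempty_iff_ne_empty.mpr htne)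
      have hle : t.card ≤ m := hcard ▸ Finset.card_le_card (Finset.mem_powerset.mp htp)
      have hlt : m - t.card < m := by omega
      exact ih (m - t.card) hlt (lt_trans hlt hm)
    have : psum (Fin n) ℚ (m + 1)
        = ((-1 : MvPolynomial (Fin n) ℚ))^(m : ℕ) *
          (((-1 : MvPolynomial (Fin n) ℚ))^(m : ℕ) * psum (Fin n) ℚ (m + 1)) := by
      rw [← mul_assoc, ← pow_add, Even.neg_one_pow ⟨m, rfl⟩, one_mul]
    rw [this]
    exact Ideal.mul_mem_left _ _ hmem2

lemma esymm_mem_spanP (n : ℕ) (m : ℕ) (hm : m < n) :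
    esymm (Fin n) ℚ (m + 1) ∈ Ideal.span (Set.range (pVec n)) := by
  have hN := mul_esymm_eq_sum (Fin n) ℚ (m + 1)
  have hq : (((m + 1 : ℕ) : ℚ)) ≠ 0 := by positivity
  have hunit : (C (((m + 1 : ℕ) : ℚ))⁻¹ * ((m + 1 : ℕ) : MvPolynomial (Fin n) ℚ)) = 1 := by
    rw [← C_eq_coe_nat, ← C_mul, inv_mul_cancel₀ hq, C_1]
  have : esymm (Fin n) ℚ (m + 1)
      = C (((m + 1 : ℕ) : ℚ))⁻¹ * (((m + 1 : ℕ) : MvPolynomial (Fin n) ℚ) * esymm (Fin n) ℚ (m + 1)) := by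
    rw [← mul_assoc, hunit, one_mul]
  rw [this, hN]
  refine Ideal.mul_mem_left _ _ (Ideal.mul_mem_left _ _ (Ideal.sum_mem _ fun a ha => ?_))
  obtain ⟨ha1, ha2⟩ := Finset.mem_filter.mp ha
  have hsum : a.1 + a.2 = m + 1 := Finset.HasAntidiagonal.mem_antidiagonal.mp ha1
  have ha2pos : 0 < a.2 := by omega
  have h2 : a.2 - 1 < n := by omega
  have : psum (Fin n) ℚ a.2 = pVec n ⟨a.2 - 1, h2⟩ := by
    simp only [pVec]
    congr 1
    omega
  rw [mul_assoc, this]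
  exact Ideal.mul_mem_left _ _ (Ideal.mul_mem_left _ _ (Ideal.subset_span ⟨_, rfl⟩))

lemma psum_mem_spanE (n : ℕ) : ∀ m : ℕ, m < n →
    psum (Fin n) ℚ (m + 1) ∈
      Ideal.span (Set.range (fun k : Fin n => esymm (Fin n) ℚ ((k : ℕ) + 1))) := by
  intro m
  induction m using Nat.strong_induction_on with
  | _ m ih =>
    intro hm
    rw [psum_eq_mul_esymm_sub_sum (Fin n) ℚ (m + 1) (Nat.succ_pos m)]
    refine Ideal.sub_mem _ ?_ (Ideal.sum_mem _ fun a ha => ?_)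
    · exact Ideal.mul_mem_left _ _ (Ideal.subset_span ⟨⟨m, hm⟩, rfl⟩)
    · obtain ⟨ha1, ha2⟩ := Finset.mem_filter.mp ha
      have hsum : a.1 + a.2 = m + 1 := Finset.HasAntidiagonal.mem_antidiagonal.mp ha1
      obtain ⟨hpos, hlt⟩ := ha2
      have h2 : a.2 - 1 < m := by omega
      have : psum (Fin n) ℚ a.2 = psum (Fin n) ℚ ((a.2 - 1) + 1) := by congr 1; omega
      rw [this]
      exact Ideal.mul_mem_left _ _ (ih (a.2 - 1) h2 (lt_trans h2 hm))

/-- The ideal `(f_1, …, f_n)` equals the ideal `(e_1, …, e_n)` generated by the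
elementary symmetric polynomials. -/
theorem fIdeal_eq_esymmIdeal (n : ℕ) :
    Ideal.span (Set.range (fPoly n)) =
    Ideal.span (Set.range (fun k : Fin n => esymm (Fin n) ℚ ((k : ℕ) + 1))) := by
  have h1 : Ideal.span (Set.range (fPoly n)) = Ideal.span (Set.range (pVec n)) := by
    apply le_antisymm
    · rw [Ideal.span_le]
      rintro _ ⟨k, rfl⟩
      exact fPoly_mem_spanP n k
    · rw [Ideal.span_le]
      rintro _ ⟨k, rfl⟩
      exact psum_mem_spanF n k k.isLt
  rw [h1]
  apply le_antisymm
  · rw [Ideal.span_le]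
    rintro _ ⟨k, rfl⟩
    exact psum_mem_spanE n k k.isLt
  · rw [Ideal.span_le]
    rintro _ ⟨k, rfl⟩
    exact esymm_mem_spanP n k k.isLt
end

section
/- Let n ≥ 0, let K be an algebraically closed field of characteristic zero, and for 1 ≤ k ≤ n define f_k = Σ_{i=k}^n x_i · ∏_{j=1}^{k−1} (x_j − x_i) ∈ K[x_1,…,x_n]. If (t_1,…,t_n) ∈ K^n satisfies f_1(t) = f_2(t) = … = f_n(t) = 0, then t_k = 0 for all k. In particular the polynomials f_1,…,f_n have the origin as their only common zero in K^n. -/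
/-! Write `S k m = ∑_{i ≥ k} t_i ^ m ∏_{j < k} (t_j - t_i)`, so that the hypothesis says
`S k 1 = 0` for every `k`. Splitting off the factor `t_k - t_i` gives the recursion
`S k (m + 1) = t_k S k m - S (k + 1) m`, hence `S k m = 0` for all `m ≥ 1`; in particular all
power sums `S 0 m = ∑ t_i ^ m` vanish. In characteristic zero Newton's identities then make every
elementary symmetric function of the `t_i` vanish, so `∏ (X - t_i) = X ^ n` and each `t_i` is
a root of `X ^ n`. -/

open MvPolynomial Finset

theorem Multiset.eq_zero_of_esymm_eq_zero {R : Type*} [CommRing R] [IsReduced R]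
    {s : Multiset R} (h : ∀ j, j ≠ 0 → s.esymm j = 0) {a : R} (ha : a ∈ s) : a = 0 := by
  have hprod : (s.map fun r => Polynomial.X - Polynomial.C r).prod =
      Polynomial.X ^ Multiset.card s := by
    rw [Multiset.prod_X_sub_X_eq_sum_esymm, Finset.sum_range_succ',
      Finset.sum_eq_zero fun j _ => by rw [h (j + 1) j.succ_ne_zero]; simp]
    simp [Multiset.esymm]
  have hroot : a ^ Multiset.card s = 0 := by
    rw [← Polynomial.eval_X (x := a), ← Polynomial.eval_pow, ← hprod,
      Polynomial.eval_multiset_prod]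
    exact Multiset.prod_eq_zero
      (Multiset.mem_map.mpr ⟨_, Multiset.mem_map_of_mem _ ha, by simp⟩)
  exact eq_zero_of_pow_eq_zero hroot

theorem MvPolynomial.eval_esymm_eq_zero_of_eval_psum_eq_zero {σ R : Type*} [CommRing R]
    [IsAddTorsionFree R] [Fintype σ] {x : σ → R}
    (h : ∀ m, m ≠ 0 → eval x (psum σ R m) = 0) {k : ℕ} (hk : k ≠ 0) :
    eval x (esymm σ R k) = 0 := by
  have newton := congrArg (eval x) (mul_esymm_eq_sum σ R k)
  rw [map_mul, map_mul, map_natCast, map_sum, ← nsmul_eq_mul,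
    sum_eq_zero fun a ha => by
      have := Finset.HasAntidiagonal.mem_antidiagonal.mp (mem_filter.mp ha).1
      rw [map_mul, h a.2 (by grind), mul_zero],
    mul_zero] at newton
  exact (nsmul_eq_zero_iff_right hk).mp newton

theorem MvPolynomial.eq_zero_of_eval_psum_eq_zero {σ R : Type*} [CommRing R] [IsReduced R]
    [IsAddTorsionFree R] [Fintype σ] {x : σ → R}
    (h : ∀ m, m ≠ 0 → eval x (psum σ R m) = 0) (i : σ) : x i = 0 := by
  refine Multiset.eq_zero_of_esymm_eq_zero (s := univ.val.map x) (fun j hj => ?_)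
    (Multiset.mem_map_of_mem x (mem_univ i))
  rw [← aeval_esymm_eq_multiset_esymm σ R, aeval_eq_eval]
  exact eval_esymm_eq_zero_of_eval_psum_eq_zero h hj

section TailPowerSum

variable {R : Type*} [CommRing R] {n : ℕ} (t : Fin n → R)

def tailPowerSum (k m : ℕ) : R :=
  ∑ i : Fin n with k ≤ i.val, t i ^ m * ∏ j : Fin n with j.val < k, (t j - t i)

theorem tailPowerSum_zero_left (m : ℕ) : tailPowerSum t 0 m = eval t (psum (Fin n) R m) := by
  simp [tailPowerSum, psum]

theorem tailPowerSum_of_le {k : ℕ} (hk : n ≤ k) (m : ℕ) : tailPowerSum t k m = 0 :=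
  sum_eq_zero fun i hi => absurd (mem_filter.mp hi).2 (by omega)

theorem tailPowerSum_succ {k : ℕ} (hk : k < n) (m : ℕ) :
    tailPowerSum t k (m + 1) = t ⟨k, hk⟩ * tailPowerSum t k m - tailPowerSum t (k + 1) m := by
  have hprod (i : Fin n) : ∏ j : Fin n with j.val < k + 1, (t j - t i) =
      (t ⟨k, hk⟩ - t i) * ∏ j : Fin n with j.val < k, (t j - t i) := by
    have hlt : univ.filter (fun j : Fin n => j.val < k + 1) =
        insert ⟨k, hk⟩ (univ.filter fun j : Fin n => j.val < k) := by
      ext j; simp [Fin.ext_iff]; omega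
    rw [hlt, prod_insert (by simp)]
  -- extending the sum to `i = k` adds a summand containing the factor `t k - t k = 0`
  have hextend : tailPowerSum t (k + 1) m = ∑ i : Fin n with k ≤ i.val,
      t i ^ m * ((t ⟨k, hk⟩ - t i) * ∏ j : Fin n with j.val < k, (t j - t i)) := by
    simp_rw [tailPowerSum, hprod]
    refine sum_subset (fun i => by simp only [mem_filter, mem_univ, true_and]; omega)
      fun i hi hni => ?_
    obtain rfl : i = ⟨k, hk⟩ := by simp_all [Fin.ext_iff]; omega
    simp
  rw [hextend, tailPowerSum, tailPowerSum, mul_sum, ← sum_sub_distrib]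
  exact sum_congr rfl fun i _ => by ring

theorem tailPowerSum_succ_eq_zero (h : ∀ k < n, tailPowerSum t k 1 = 0) (m k : ℕ) :
    tailPowerSum t k (m + 1) = 0 := by
  induction m generalizing k with
  | zero => exact (lt_or_ge k n).elim (h k) (tailPowerSum_of_le t · 1)
  | succ m ih =>
    rcases lt_or_ge k n with hk | hk
    · rw [tailPowerSum_succ t hk, ih k, ih (k + 1), mul_zero, sub_zero]
    · exact tailPowerSum_of_le t hk _

end TailPowerSum

theorem common_zero_is_origin_general (K : Type*) [Field K] [CharZero K]
    (n : ℕ) (t : Fin n → K)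
    (h : ∀ k : Fin n,
      eval t (∑ i ∈ Finset.univ.filter (fun i : Fin n => k ≤ i),
        X i * ∏ j ∈ Finset.univ.filter (fun j : Fin n => j < k),
          (X j - X i : MvPolynomial (Fin n) K)) = 0) :
    ∀ k : Fin n, t k = 0 := by
  have h_one (k : ℕ) (hk : k < n) : tailPowerSum t k 1 = 0 := by
    rw [← h ⟨k, hk⟩]
    simp [tailPowerSum, Fin.le_def, Fin.lt_def]
  refine eq_zero_of_eval_psum_eq_zero fun m hm => ?_
  obtain ⟨m, rfl⟩ := Nat.exists_eq_add_one_of_ne_zero hm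
  rw [← tailPowerSum_zero_left]
  exact tailPowerSum_succ_eq_zero t h_one m 0

/-- If all the polynomials `f_k = Σ_{i=k}^n x_i ∏_{j=1}^{k-1} (x_j - x_i)` vanish at a
point `t` of `K^n` (`K` algebraically closed of characteristic zero), then `t = 0`;
i.e. the origin is the only common zero of `f_1, …, f_n`.  Everything is 0-indexed:
`k : Fin n` corresponds to `k+1 ∈ {1,…,n}`. -/
theorem common_zero_is_origin (K : Type*) [Field K] [IsAlgClosed K] [CharZero K]
    (n : ℕ) (t : Fin n → K)
    (h : ∀ k : Fin n,
      eval t (∑ i ∈ Finset.univ.filter (fun i : Fin n => k ≤ i),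
        X i * ∏ j ∈ Finset.univ.filter (fun j : Fin n => j < k),
          (X j - X i : MvPolynomial (Fin n) K)) = 0) :
    ∀ k : Fin n, t k = 0 :=
  common_zero_is_origin_general K n t h
end

section
/- Let n, m ≥ 0 and let A = ℚ[x_1,…,x_n,y_1,…,y_m]. Let I ⊂ A be the ideal generated by e_k(x_1,…,x_n) − e_k(1,…,n) for 1 ≤ k ≤ n, and let I' ⊂ A be the ideal generated by e_k(y_1,…,y_m) − e_k(1,…,m) for 1 ≤ k ≤ m, where e_k denotes the k-th elementary symmetric polynomial. Then (I + I')_0 = I_0 + I'_0, where for an ideal J ⊆ A, J_0 denotes the homogeneous ideal generated by the top-degree homogeneous parts of all elements of J. -/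
open MvPolynomial

/-- For an ideal `J`, the homogeneous ideal `J₀` generated by the top-degree homogeneous
parts of all nonzero elements of `J`. -/
noncomputable def leadingForms {τ : Type*} (J : Ideal (MvPolynomial τ ℚ)) :
    Ideal (MvPolynomial τ ℚ) :=
  Ideal.span { g | ∃ f ∈ J, f ≠ 0 ∧ g = homogeneousComponent f.totalDegree f }

/-- The ideal of `A = ℚ[x_1,…,x_n,y_1,…,y_m]` generated by
`e_k(x_1,…,x_n) - e_k(1,…,n)`, `1 ≤ k ≤ n`. -/
noncomputable def xIdeal (n m : ℕ) : Ideal (MvPolynomial (Fin n ⊕ Fin m) ℚ) :=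
  Ideal.span (Set.range (fun k : Fin n =>
    rename Sum.inl (esymm (Fin n) ℚ ((k : ℕ) + 1)) - C (cval n ((k : ℕ) + 1))))

/-- The ideal of `A = ℚ[x_1,…,x_n,y_1,…,y_m]` generated by
`e_k(y_1,…,y_m) - e_k(1,…,m)`, `1 ≤ k ≤ m`. -/
noncomputable def yIdeal (n m : ℕ) : Ideal (MvPolynomial (Fin n ⊕ Fin m) ℚ) :=
  Ideal.span (Set.range (fun k : Fin m =>
    rename Sum.inr (esymm (Fin m) ℚ ((k : ℕ) + 1)) - C (cval m ((k : ℕ) + 1))))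

/-!
Write `J₁ = I·A` and `J₂ = I'·A` for the extensions of ideals `I ⊆ ℚ[x]` and `I' ⊆ ℚ[y]`. Every
element of `J₁ + J₂` is `p + q` with `p ∈ J₁`, `q ∈ J₂`. If the top forms of `p` and `q` cancel,
their common top form `g` is a top form of both `J₁` and `J₂`: every `y`-coefficient of `g` is a
top form of `I`, and every `x`-coefficient a top form of `I'`. Projecting the `x`-monomials onto
the span of the top forms of `I` rewrites `g` as a sum of products `φ ψ` of top forms of `I` and
of `I'`, hence as the top form of an element `G ∈ J₁ ∩ J₂`. Replacing `(p, q)` by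
`(p - G, q + G)` lowers the degree of the representation, so induction on that degree
finishes.
-/

theorem Finsupp.degree_sumElim {σ τ : Type*} (α : σ →₀ ℕ) (β : τ →₀ ℕ) :
    (Finsupp.sumElim α β).degree = α.degree + β.degree := by
  rw [Finsupp.sumElim_eq_add, map_add, Finsupp.degree_mapDomain, Finsupp.degree_mapDomain]

namespace MvPolynomial

section HomogeneousComponent

variable {R σ : Type*} [CommSemiring R]

theorem homogeneousComponent_mul_of_totalDegree_le {p q : MvPolynomial σ R} {a b : ℕ}
    (hp : p.totalDegree ≤ a) (hq : q.totalDegree ≤ b) :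
    homogeneousComponent (a + b) (p * q) =
      homogeneousComponent a p * homogeneousComponent b q := by
  classical
  ext d
  rw [coeff_homogeneousComponent]
  split_ifs with hd
  · rw [coeff_mul, coeff_mul]
    refine Finset.sum_congr rfl fun x hx => ?_
    have hdeg : x.1.degree + x.2.degree = a + b := by
      rw [← map_add, Finset.HasAntidiagonal.mem_antidiagonal.1 hx, hd]
    simp only [coeff_homogeneousComponent]
    by_cases ha : x.1.degree = a
    · rw [if_pos ha, if_pos (by omega)]
    · rw [if_neg ha, zero_mul]
      rcases Nat.lt_or_gt_of_ne ha with h | h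
      · rw [coeff_eq_zero_of_totalDegree_lt (f := q) (by change _ < x.2.degree; omega), mul_zero]
      · rw [coeff_eq_zero_of_totalDegree_lt (f := p) (by change _ < x.1.degree; omega), zero_mul]
  · exact (((homogeneousComponent_isHomogeneous a p).mul
      (homogeneousComponent_isHomogeneous b q)).coeff_eq_zero hd).symm

theorem totalDegree_le_of_homogeneousComponent_eq_zero {p : MvPolynomial σ R} {n : ℕ}
    (hp : p.totalDegree ≤ n + 1) (h : homogeneousComponent (n + 1) p = 0) :
    p.totalDegree ≤ n := by
  refine Finset.sup_le fun d hd => ?_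
  have hle : d.degree ≤ n + 1 := (le_totalDegree hd).trans hp
  have hne : d.degree ≠ n + 1 := fun hd' => mem_support_iff.1 hd (by
    simpa [coeff_homogeneousComponent, hd'] using congrArg (coeff d) h)
  change d.degree ≤ n
  omega

end HomogeneousComponent

section Coefficients

variable {R σ τ : Type*} [CommSemiring R]

theorem sumAlgEquiv_rename_inl (b : MvPolynomial σ R) :
    sumAlgEquiv R σ τ (rename Sum.inl b) = map C b :=
  AlgHom.congr_fun (sumAlgEquiv_comp_rename_inl R σ τ) b

theorem sumAlgEquiv_rename_inr (c : MvPolynomial τ R) :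
    sumAlgEquiv R σ τ (rename Sum.inr c) = C c :=
  AlgHom.congr_fun (sumAlgEquiv_comp_rename_inr R σ τ) c

noncomputable def leftCoeff (α : σ →₀ ℕ) : MvPolynomial (σ ⊕ τ) R →ₗ[R] MvPolynomial τ R :=
  ((lcoeff (MvPolynomial τ R) α).restrictScalars R).comp (sumAlgEquiv R σ τ).toLinearMap

theorem leftCoeff_apply (α : σ →₀ ℕ) (p : MvPolynomial (σ ⊕ τ) R) :
    leftCoeff α p = (sumAlgEquiv R σ τ p).coeff α := rfl

theorem coeff_leftCoeff (α : σ →₀ ℕ) (β : τ →₀ ℕ) (p : MvPolynomial (σ ⊕ τ) R) :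
    (leftCoeff α p).coeff β = p.coeff (Finsupp.sumElim α β) := by
  simp [leftCoeff_apply, sumAlgEquiv, coeff, AddMonoidAlgebra.curryAlgEquiv,
    AddMonoidAlgebra.curryRingEquiv, AddMonoidAlgebra.curryAddEquiv]

theorem leftCoeff_rename_inl_mul_rename_inr (α : σ →₀ ℕ) (b : MvPolynomial σ R)
    (c : MvPolynomial τ R) :
    leftCoeff α (rename Sum.inl b * rename Sum.inr c) = b.coeff α • c := by
  rw [leftCoeff_apply, map_mul, sumAlgEquiv_rename_inl, sumAlgEquiv_rename_inr, mul_comm,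
    coeff_C_mul, coeff_map, smul_eq_C_mul, mul_comm]

theorem sum_leftCoeff (p : MvPolynomial (σ ⊕ τ) R) :
    ∑ α ∈ (sumAlgEquiv R σ τ p).support,
      rename Sum.inl (monomial α 1) * rename Sum.inr (leftCoeff α p) = p := by
  apply (sumAlgEquiv R σ τ).injective
  conv_rhs => rw [← support_sum_monomial_coeff (sumAlgEquiv R σ τ p)]
  simp_rw [map_sum, map_mul, sumAlgEquiv_rename_inl, sumAlgEquiv_rename_inr, map_monomial]
  refine Finset.sum_congr rfl fun α _ => ?_
  rw [C_1, mul_comm, C_mul_monomial, mul_one, leftCoeff_apply]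

theorem leftCoeff_homogeneousComponent (α : σ →₀ ℕ) (k : ℕ) (p : MvPolynomial (σ ⊕ τ) R) :
    leftCoeff α (homogeneousComponent (k + α.degree) p) =
      homogeneousComponent k (leftCoeff α p) := by
  ext β
  simp only [coeff_leftCoeff, coeff_homogeneousComponent, Finsupp.degree_sumElim]
  split_ifs <;> first | rfl | omega

theorem totalDegree_leftCoeff_le {α : σ →₀ ℕ} {k : ℕ} {p : MvPolynomial (σ ⊕ τ) R}
    (hp : p.totalDegree ≤ k + α.degree) : (leftCoeff α p).totalDegree ≤ k := by
  refine Finset.sup_le fun β hβ => ?_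
  rw [mem_support_iff, coeff_leftCoeff, ← mem_support_iff] at hβ
  have hle : (Finsupp.sumElim α β).degree ≤ k + α.degree := (le_totalDegree hβ).trans hp
  change β.degree ≤ k
  rw [Finsupp.degree_sumElim] at hle
  omega

theorem leftCoeff_eq_zero_of_totalDegree_lt {α : σ →₀ ℕ} {p : MvPolynomial (σ ⊕ τ) R}
    (hp : p.totalDegree < α.degree) : leftCoeff α p = 0 := by
  ext β
  rw [coeff_leftCoeff, coeff_zero]
  refine coeff_eq_zero_of_totalDegree_lt ?_
  change _ < (Finsupp.sumElim α β).degree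
  rw [Finsupp.degree_sumElim]
  omega

noncomputable def rightCoeff (β : τ →₀ ℕ) : MvPolynomial (σ ⊕ τ) R →ₗ[R] MvPolynomial σ R :=
  leftCoeff β ∘ₗ (rename (Equiv.sumComm σ τ)).toLinearMap

theorem rightCoeff_apply (β : τ →₀ ℕ) (p : MvPolynomial (σ ⊕ τ) R) :
    rightCoeff β p = leftCoeff β (rename (Equiv.sumComm σ τ) p) := rfl

theorem rightCoeff_rename_inl_mul_rename_inr (β : τ →₀ ℕ) (b : MvPolynomial σ R)
    (c : MvPolynomial τ R) :
    rightCoeff β (rename Sum.inl b * rename Sum.inr c) = c.coeff β • b := by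
  rw [rightCoeff_apply, map_mul, rename_rename, rename_rename, mul_comm]
  exact leftCoeff_rename_inl_mul_rename_inr β c b

theorem eq_zero_of_forall_rightCoeff_eq_zero {p : MvPolynomial (σ ⊕ τ) R}
    (h : ∀ β, rightCoeff β p = 0) : p = 0 := by
  have h' : sumAlgEquiv R τ σ (rename (Equiv.sumComm σ τ) p) = 0 := ext _ _ h
  rw [EmbeddingLike.map_eq_zero_iff] at h'
  exact rename_injective _ (Equiv.sumComm σ τ).injective (h'.trans (map_zero _).symm)

end Coefficients

theorem leftCoeff_mem_of_mem_map_inr {R σ τ : Type*} [CommRing R] {I : Ideal (MvPolynomial τ R)}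
    {p : MvPolynomial (σ ⊕ τ) R} (hp : p ∈ I.map (rename (Sum.inr : τ → σ ⊕ τ)))
    (α : σ →₀ ℕ) : leftCoeff α p ∈ I := by
  have hle : I.map (rename (Sum.inr : τ → σ ⊕ τ)) ≤
      (I.map (C : MvPolynomial τ R →+* _)).comap (sumAlgEquiv R σ τ) := by
    rw [Ideal.map_le_iff_le_comap]
    intro c hc
    rw [Ideal.mem_comap, Ideal.mem_comap, sumAlgEquiv_rename_inr]
    exact Ideal.mem_map_of_mem _ hc
  have hmem : sumAlgEquiv R σ τ p ∈
      I.map (C : MvPolynomial τ R →+* MvPolynomial σ (MvPolynomial τ R)) := hle hp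
  rw [leftCoeff_apply]
  exact mem_map_C_iff.1 hmem α

end MvPolynomial

open MvPolynomial

section TopForms

variable {R σ : Type*}

/-- The degree-`n` graded piece of the leading-form ideal `J₀`. -/
noncomputable def topForms [CommSemiring R] (J : Ideal (MvPolynomial σ R)) (n : ℕ) :
    Submodule R (MvPolynomial σ R) :=
  (J.restrictScalars R ⊓ restrictTotalDegree σ R n).map (homogeneousComponent n)

section CommSemiring

variable [CommSemiring R] {J : Ideal (MvPolynomial σ R)} {n : ℕ} {g : MvPolynomial σ R}

theorem mem_topForms :
    g ∈ topForms J n ↔ ∃ f ∈ J, f.totalDegree ≤ n ∧ homogeneousComponent n f = g := by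
  simp [topForms, mem_restrictTotalDegree, and_assoc]

theorem homogeneousComponent_mem_topForms {f : MvPolynomial σ R} (hf : f ∈ J)
    (hn : f.totalDegree ≤ n) : homogeneousComponent n f ∈ topForms J n :=
  mem_topForms.2 ⟨f, hf, hn, rfl⟩

theorem isHomogeneous_of_mem_topForms (hg : g ∈ topForms J n) : g.IsHomogeneous n := by
  obtain ⟨f, -, -, rfl⟩ := mem_topForms.1 hg
  exact homogeneousComponent_isHomogeneous n f

end CommSemiring

theorem topForms_sup_le [CommRing R] {J₁ J₂ : Ideal (MvPolynomial σ R)}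
    (h : ∀ n, topForms J₁ n ⊓ topForms J₂ n ≤ topForms (J₁ ⊓ J₂) n) (n : ℕ) :
    topForms (J₁ ⊔ J₂) n ≤ topForms J₁ n ⊔ topForms J₂ n := by
  have base : ∀ p ∈ J₁, ∀ q ∈ J₂, p.totalDegree ≤ n → q.totalDegree ≤ n →
      homogeneousComponent n (p + q) ∈ topForms J₁ n ⊔ topForms J₂ n :=
    fun p hp q hq hpn hqn => by
      rw [map_add]
      exact Submodule.add_mem_sup (homogeneousComponent_mem_topForms hp hpn)
        (homogeneousComponent_mem_topForms hq hqn)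
  suffices key : ∀ N, ∀ p ∈ J₁, ∀ q ∈ J₂, p.totalDegree ≤ N → q.totalDegree ≤ N →
      (p + q).totalDegree ≤ n → homogeneousComponent n (p + q) ∈ topForms J₁ n ⊔ topForms J₂ n by
    intro g hg
    obtain ⟨f, hf, hfn, rfl⟩ := mem_topForms.1 hg
    obtain ⟨p, hp, q, hq, rfl⟩ := Submodule.mem_sup.1 hf
    exact key _ p hp q hq (le_max_left _ _) (le_max_right _ _) hfn
  intro N
  induction N with
  | zero =>
    exact fun p hp q hq hp0 hq0 _ => base p hp q hq (hp0.trans n.zero_le) (hq0.trans n.zero_le)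
  | succ N ih =>
    intro p hp q hq hpN hqN hpqn
    rcases le_or_gt (N + 1) n with hN | hN
    · exact base p hp q hq (hpN.trans hN) (hqN.trans hN)
    have hcancel : homogeneousComponent (N + 1) p = -homogeneousComponent (N + 1) q := by
      rw [eq_neg_iff_add_eq_zero, ← map_add]
      exact homogeneousComponent_eq_zero _ _ (by omega)
    obtain ⟨G, ⟨hG₁, hG₂⟩, hGN, hG⟩ := mem_topForms.1 <| h (N + 1)
      ⟨homogeneousComponent_mem_topForms hp hpN,
        hcancel ▸ neg_mem (homogeneousComponent_mem_topForms hq hqN)⟩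
    have hpG : (p - G).totalDegree ≤ N :=
      totalDegree_le_of_homogeneousComponent_eq_zero
        ((totalDegree_sub _ _).trans (max_le hpN hGN)) (by rw [map_sub, hG, sub_self])
    have hqG : (q + G).totalDegree ≤ N :=
      totalDegree_le_of_homogeneousComponent_eq_zero
        ((totalDegree_add _ _).trans (max_le hqN hGN))
        (by rw [map_add, hG, hcancel, add_neg_cancel])
    have hsum : p - G + (q + G) = p + q := by abel
    rw [← hsum] at hpqn ⊢
    exact ih (p - G) (sub_mem hp hG₁) (q + G) (add_mem hq hG₂) hpG hqG hpqn

end TopForms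

section Extension

variable {R σ τ : Type*} [CommRing R] {I : Ideal (MvPolynomial σ R)}
  {I' : Ideal (MvPolynomial τ R)} {n : ℕ} {g : MvPolynomial (σ ⊕ τ) R}

theorem leftCoeff_mem_topForms (hg : g ∈ topForms (I'.map (rename (Sum.inr : τ → σ ⊕ τ))) n)
    (α : σ →₀ ℕ) : leftCoeff α g ∈ topForms I' (n - α.degree) := by
  obtain ⟨f, hf, hfn, rfl⟩ := mem_topForms.1 hg
  rcases le_or_gt α.degree n with hα | hα
  · obtain ⟨k, rfl⟩ := Nat.exists_eq_add_of_le' hα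
    rw [Nat.add_sub_cancel, leftCoeff_homogeneousComponent]
    exact homogeneousComponent_mem_topForms (leftCoeff_mem_of_mem_map_inr hf α)
      (totalDegree_leftCoeff_le hfn)
  · rw [leftCoeff_eq_zero_of_totalDegree_lt
      ((homogeneousComponent_isHomogeneous n f).totalDegree_le.trans_lt hα)]
    exact zero_mem _

theorem rename_sumComm_mem_topForms
    (hg : g ∈ topForms (I.map (rename (Sum.inl : σ → σ ⊕ τ))) n) :
    rename (Equiv.sumComm σ τ) g ∈ topForms (I.map (rename (Sum.inr : σ → τ ⊕ σ))) n := by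
  obtain ⟨f, hf, hfn, rfl⟩ := mem_topForms.1 hg
  have hle : I.map (rename (Sum.inl : σ → σ ⊕ τ)) ≤
      (I.map (rename (Sum.inr : σ → τ ⊕ σ))).comap (rename (Equiv.sumComm σ τ)) := by
    rw [Ideal.map_le_iff_le_comap]
    intro b hb
    rw [Ideal.mem_comap, Ideal.mem_comap, rename_rename]
    exact Ideal.mem_map_of_mem _ hb
  refine mem_topForms.2 ⟨rename (Equiv.sumComm σ τ) f, hle hf, ?_,
    (rename_homogeneousComponent _ _).symm⟩
  rwa [← renameEquiv_apply, totalDegree_renameEquiv]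

theorem rightCoeff_mem_topForms (hg : g ∈ topForms (I.map (rename (Sum.inl : σ → σ ⊕ τ))) n)
    (β : τ →₀ ℕ) : rightCoeff β g ∈ topForms I (n - β.degree) :=
  leftCoeff_mem_topForms (rename_sumComm_mem_topForms hg) β

theorem rename_inl_mul_rename_inr_mem_topForms {φ : MvPolynomial σ R} {ψ : MvPolynomial τ R}
    {a b : ℕ} (hφ : φ ∈ topForms I a) (hψ : ψ ∈ topForms I' b) :
    rename Sum.inl φ * rename Sum.inr ψ ∈ topForms
      (I.map (rename (Sum.inl : σ → σ ⊕ τ)) ⊓ I'.map (rename (Sum.inr : τ → σ ⊕ τ))) (a + b) := by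
  obtain ⟨u, hu, hua, rfl⟩ := mem_topForms.1 hφ
  obtain ⟨v, hv, hvb, rfl⟩ := mem_topForms.1 hψ
  have hua' := (totalDegree_rename_le (Sum.inl : σ → σ ⊕ τ) u).trans hua
  have hvb' := (totalDegree_rename_le (Sum.inr : τ → σ ⊕ τ) v).trans hvb
  refine mem_topForms.2 ⟨rename Sum.inl u * rename Sum.inr v,
    ⟨Ideal.mul_mem_right _ _ (Ideal.mem_map_of_mem _ hu),
      Ideal.mul_mem_left _ _ (Ideal.mem_map_of_mem _ hv)⟩,
    (totalDegree_mul _ _).trans (add_le_add hua' hvb'), ?_⟩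
  rw [homogeneousComponent_mul_of_totalDegree_le hua' hvb', rename_homogeneousComponent,
    rename_homogeneousComponent]

theorem homogeneousComponent_rename_inl_mul_rename_inr_mem_topForms {t : MvPolynomial σ R}
    {c : MvPolynomial τ R} {d : ℕ} (ht : t ∈ ⨆ e, topForms I e) (hc : c ∈ topForms I' d) :
    homogeneousComponent n (rename Sum.inl t * rename Sum.inr c) ∈ topForms
      (I.map (rename (Sum.inl : σ → σ ⊕ τ)) ⊓ I'.map (rename (Sum.inr : τ → σ ⊕ τ))) n := by
  induction ht using Submodule.iSup_induction' with
  | mem e t ht =>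
    have hhom : (rename Sum.inl t * rename Sum.inr c : MvPolynomial (σ ⊕ τ) R).IsHomogeneous
        (e + d) :=
      (isHomogeneous_of_mem_topForms ht).rename_isHomogeneous.mul
        (isHomogeneous_of_mem_topForms hc).rename_isHomogeneous
    rw [homogeneousComponent_of_mem hhom]
    split_ifs with hn
    · exact hn ▸ rename_inl_mul_rename_inr_mem_topForms ht hc
    · exact zero_mem _
  | zero => simp
  | add t₁ t₂ _ _ h₁ h₂ => simpa [add_mul] using add_mem h₁ h₂

end Extension

theorem topForms_map_inl_inf_topForms_map_inr_le {K σ τ : Type*} [Field K]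
    (I : Ideal (MvPolynomial σ K)) (I' : Ideal (MvPolynomial τ K)) (n : ℕ) :
    topForms (I.map (rename (Sum.inl : σ → σ ⊕ τ))) n ⊓
        topForms (I'.map (rename (Sum.inr : τ → σ ⊕ τ))) n ≤
      topForms (I.map (rename (Sum.inl : σ → σ ⊕ τ)) ⊓
        I'.map (rename (Sum.inr : τ → σ ⊕ τ))) n := by
  rintro g ⟨hg₁, hg₂⟩
  set T := ⨆ e, topForms I e
  obtain ⟨r, hr⟩ := T.subtype.exists_leftInverse_of_injective T.ker_subtype
  have hproj : ∀ b ∈ T, (r b : MvPolynomial σ K) = b := fun b hb =>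
    congrArg Subtype.val (LinearMap.congr_fun hr ⟨b, hb⟩)
  set S := (sumAlgEquiv K σ τ g).support
  have hrow : ∀ β, rightCoeff β g = ∑ α ∈ S, (leftCoeff α g).coeff β • monomial α 1 := by
    intro β
    conv_lhs => rw [← sum_leftCoeff g]
    simp only [map_sum, rightCoeff_rename_inl_mul_rename_inr]
    rfl
  -- each `y`-coefficient of the difference is `b - r b` with `b ∈ T`
  have hg : g = ∑ α ∈ S, rename Sum.inl (r (monomial α 1) : MvPolynomial σ K) *
      rename Sum.inr (leftCoeff α g) := by
    rw [← sub_eq_zero]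
    refine eq_zero_of_forall_rightCoeff_eq_zero fun β => ?_
    have hβ : rightCoeff β g ∈ T := Submodule.mem_iSup_of_mem _ (rightCoeff_mem_topForms hg₁ β)
    simp only [map_sub, map_sum, rightCoeff_rename_inl_mul_rename_inr]
    rw [← hproj _ hβ, hrow]
    simp
  rw [← homogeneousComponent_eq_self (isHomogeneous_of_mem_topForms hg₁), hg, map_sum]
  exact Submodule.sum_mem _ fun α _ =>
    homogeneousComponent_rename_inl_mul_rename_inr_mem_topForms (r _).2
      (leftCoeff_mem_topForms hg₂ α)

section LeadingForms

variable {σ : Type*} {J₁ J₂ : Ideal (MvPolynomial σ ℚ)}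

theorem leadingForms_mono (h : J₁ ≤ J₂) : leadingForms J₁ ≤ leadingForms J₂ :=
  Ideal.span_mono fun _ ⟨f, hf, hf0, hg⟩ => ⟨f, h hf, hf0, hg⟩

theorem topForms_le_leadingForms (J : Ideal (MvPolynomial σ ℚ)) (n : ℕ) :
    topForms J n ≤ (leadingForms J).restrictScalars ℚ := by
  intro g hg
  obtain ⟨f, hf, hfn, rfl⟩ := mem_topForms.1 hg
  rcases eq_or_ne f 0 with rfl | hf0
  · simp
  rcases hfn.lt_or_eq with hlt | rfl
  · rw [homogeneousComponent_eq_zero _ _ hlt]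
    exact zero_mem _
  · exact Ideal.subset_span ⟨f, hf, hf0, rfl⟩

theorem leadingForms_sup (h : ∀ n, topForms J₁ n ⊓ topForms J₂ n ≤ topForms (J₁ ⊓ J₂) n) :
    leadingForms (J₁ ⊔ J₂) = leadingForms J₁ ⊔ leadingForms J₂ := by
  refine le_antisymm (Ideal.span_le.2 ?_)
    (sup_le (leadingForms_mono le_sup_left) (leadingForms_mono le_sup_right))
  rintro _ ⟨f, hf, -, rfl⟩
  obtain ⟨a, ha, b, hb, hab⟩ :=
    Submodule.mem_sup.1 (topForms_sup_le h _ (homogeneousComponent_mem_topForms hf le_rfl))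
  rw [← hab]
  exact Submodule.add_mem_sup (topForms_le_leadingForms J₁ _ ha) (topForms_le_leadingForms J₂ _ hb)

end LeadingForms

/-- `(I + I')₀ = I₀ + I'₀` for the two vanishing ideals of permutation points. -/
theorem leadingForms_add (n m : ℕ) :
    leadingForms (xIdeal n m + yIdeal n m) =
      leadingForms (xIdeal n m) + leadingForms (yIdeal n m) := by
  have hx : xIdeal n m = (Ideal.span (Set.range fun k : Fin n =>
      esymm (Fin n) ℚ (k + 1) - C (cval n (k + 1)))).map
        (rename (Sum.inl : _ → Fin n ⊕ Fin m)) := by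
    simp [xIdeal, Ideal.map_span, ← Set.range_comp, Function.comp_def]
  have hy : yIdeal n m = (Ideal.span (Set.range fun k : Fin m =>
      esymm (Fin m) ℚ (k + 1) - C (cval m (k + 1)))).map
        (rename (Sum.inr : _ → Fin n ⊕ Fin m)) := by
    simp [yIdeal, Ideal.map_span, ← Set.range_comp, Function.comp_def]
  rw [Submodule.add_eq_sup, Submodule.add_eq_sup, hx, hy]
  exact leadingForms_sup (topForms_map_inl_inf_topForms_map_inr_le _ _)
end
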